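/- Let ξ_α be random variables in E with (i) C_α →_D C in (F, τ_uF), (ii) limsup_α P_α(ξ_α ∉ C_α) = 0, and (iii) asymptotic tightness: for every ε > 0 there is a compact K with liminf_α P_α(ξ_α ∈ K) ≥ 1 − ε. Then limsup_α P_α(ξ_α ∈ F) ≤ T_C(F) for all closed F ⊆ E, where T_C(B) = P(C ∩ B ≠ ∅) is the capacity functional of C. If in addition C ⊆ {ξ} almost surely for some random variable ξ in E, then ξ_α converges in distribution to ξ in (E, G). -/

import Mathlib

open TopologicalSpace MeasureTheory Filter Set
open scoped ENNReal

/-- The hitting set `H(A)` of a subset `A ⊆ E`: all closed sets meeting `A`. -/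
def hitting {E : Type*} [TopologicalSpace E] (A : Set E) : Set (Closeds E) :=
  {F | ((F : Set E) ∩ A).Nonempty}

/-- The missing set `M(A)` of a subset `A ⊆ E`: all closed sets disjoint from `A`. -/
def missing {E : Type*} [TopologicalSpace E] (A : Set E) : Set (Closeds E) :=
  {F | (F : Set E) ∩ A = ∅}

/-- The upper Fell topology on the hyperspace of closed sets. -/
def upperFell (E : Type*) [TopologicalSpace E] : TopologicalSpace (Closeds E) :=
  generateFrom {U | ∃ K : Set E, IsCompact K ∧ U = missing K}

/-- The Fell topology on the hyperspace of closed sets. -/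
def fell (E : Type*) [TopologicalSpace E] : TopologicalSpace (Closeds E) :=
  generateFrom ({U | ∃ K : Set E, IsCompact K ∧ U = missing K} ∪
    {U | ∃ G : Set E, IsOpen G ∧ U = hitting G})

/-- The Borel σ-algebra of the Fell topology (it coincides with that of the
upper Fell topology). -/
def borelFell (E : Type*) [TopologicalSpace E] : MeasurableSpace (Closeds E) :=
  @borel (Closeds E) (fell E)

/-- Weak convergence of a net of (probability) measures with respect to a
topology `t` on the hyperspace: limsup over every `t`-closed set is dominated. -/
def WeakConvTo {E : Type*} [TopologicalSpace E] {ι : Type*} (l : Filter ι)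
    (t : TopologicalSpace (Closeds E))
    (P : ι → @Measure (Closeds E) (borelFell E))
    (Q : @Measure (Closeds E) (borelFell E)) : Prop :=
  ∀ C : Set (Closeds E), @IsClosed _ t C → l.limsup (fun i => P i C) ≤ Q C

/-!
Fix a closed `F` and `ε > 0`, and pick a compact `K` carrying all but `ε` of the mass of `ξ_α`
asymptotically. If `ξ_α ∈ F` then either `ξ_α ∉ C_α`, or `ξ_α ∉ K`, or `C_α` hits the compact set
`F ∩ K`. The hitting set of a compact set is closed in the upper Fell topology, so the
portmanteau bound for `C_α →_D C` controls the last event by `P(C ∩ F ∩ K ≠ ∅) ≤ T_C(F)`, while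
the first two contribute `0` and at most `ε` in the limit. When `C ⊆ {ξ}` a.s., `C` can only meet
`F` at `ξ`, so `T_C(F) ≤ P(ξ ∈ F)`.
-/

theorem MeasureTheory.Measure.map_apply_le_of_measurableSet {α β : Type*} [MeasurableSpace α]
    [MeasurableSpace β] {μ : Measure α} (f : α → β) {s : Set β} (hs : MeasurableSet s) :
    μ.map f s ≤ μ (f ⁻¹' s) := by
  by_cases hf : AEMeasurable f μ
  · exact (Measure.map_apply_of_aemeasurable hf hs).le
  · simp [Measure.map_of_not_aemeasurable hf]

theorem ENNReal.limsup_add_le' {ι : Type*} {l : Filter ι} (u v : ι → ℝ≥0∞) :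
    l.limsup (u + v) ≤ l.limsup u + l.limsup v := by
  refine ENNReal.le_of_forall_pos_le_add fun ε hε hfin => ?_
  obtain ⟨hu, hv⟩ := ENNReal.add_lt_top.1 hfin
  have hε2 : (ε : ℝ≥0∞) / 2 ≠ 0 := by simpa using hε.ne'
  refine limsup_le_of_le (by isBoundedDefault) ?_
  filter_upwards [eventually_lt_of_limsup_lt (ENNReal.lt_add_right hu.ne hε2),
    eventually_lt_of_limsup_lt (ENNReal.lt_add_right hv.ne hε2)] with i hui hvi
  calc u i + v i ≤ (l.limsup u + ε / 2) + (l.limsup v + ε / 2) := add_le_add hui.le hvi.le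
    _ = l.limsup u + l.limsup v + ε := by rw [add_add_add_comm, ENNReal.add_halves]

theorem limsup_measure_compl_le_of_le_liminf {ι : Type*} {l : Filter ι} {Ω : ι → Type*}
    [∀ i, MeasurableSpace (Ω i)] {μ : ∀ i, Measure (Ω i)} [∀ i, IsProbabilityMeasure (μ i)]
    {s : ∀ i, Set (Ω i)} (hs : ∀ i, MeasurableSet (s i)) {ε : ℝ≥0∞}
    (hε : 1 - ε ≤ l.liminf (fun i => μ i (s i))) :
    l.limsup (fun i => μ i (s i)ᶜ) ≤ ε := by
  simp only [prob_compl_eq_one_sub (hs _)]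
  rw [ENNReal.limsup_const_sub l _ ENNReal.one_ne_top]
  exact (tsub_le_tsub_left hε 1).trans tsub_tsub_le

section Hyperspace

variable {E : Type*} [TopologicalSpace E]

theorem compl_hitting (A : Set E) : (hitting A)ᶜ = missing A := by
  ext G
  simp [hitting, missing, not_nonempty_iff_eq_empty]

theorem isClosed_hitting_upperFell {K : Set E} (hK : IsCompact K) :
    @IsClosed _ (upperFell E) (hitting K) := by
  let := upperFell E
  rw [← isOpen_compl_iff, compl_hitting]
  exact isOpen_generateFrom_of_mem ⟨K, hK, rfl⟩

theorem measurableSet_hitting_borelFell {K : Set E} (hK : IsCompact K) :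
    MeasurableSet[borelFell E] (hitting K) := by
  rw [← compl_compl (hitting K), compl_hitting]
  exact (MeasurableSpace.measurableSet_generateFrom
    (isOpen_generateFrom_of_mem (Or.inl ⟨K, hK, rfl⟩))).compl

end Hyperspace

theorem measure_mem_le_measure_inter_nonempty_add {E Ω : Type*} [MeasurableSpace Ω]
    (μ : Measure Ω) (ξ : Ω → E) (C : Ω → Set E) (F K : Set E) :
    μ {ω | ξ ω ∈ F} ≤
      μ {ω | (C ω ∩ (F ∩ K)).Nonempty} + (μ {ω | ξ ω ∉ C ω} + μ {ω | ξ ω ∉ K}) := by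
  have hsub : {ω | ξ ω ∈ F} ⊆
      {ω | (C ω ∩ (F ∩ K)).Nonempty} ∪ ({ω | ξ ω ∉ C ω} ∪ {ω | ξ ω ∉ K}) := by
    intro ω hωF
    by_cases hωC : ξ ω ∈ C ω
    · by_cases hωK : ξ ω ∈ K
      · exact Or.inl ⟨ξ ω, hωC, hωF, hωK⟩
      · exact Or.inr (Or.inr hωK)
    · exact Or.inr (Or.inl hωC)
  calc μ {ω | ξ ω ∈ F}
      ≤ μ ({ω | (C ω ∩ (F ∩ K)).Nonempty} ∪ ({ω | ξ ω ∉ C ω} ∪ {ω | ξ ω ∉ K})) :=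
        measure_mono hsub
    _ ≤ _ := (measure_union_le _ _).trans (add_le_add_right (measure_union_le _ _) _)

section RandomClosedSets

attribute [local instance] borelFell

variable {E : Type*} [TopologicalSpace E] {ι : Type*} {l : Filter ι} {Ω : ι → Type*}
  [∀ i, MeasurableSpace (Ω i)] {μ : ∀ i, Measure (Ω i)} {C : ∀ i, Ω i → Closeds E}
  {Ω₀ : Type*} [MeasurableSpace Ω₀] {μ₀ : Measure Ω₀} {C₀ : Ω₀ → Closeds E}

theorem limsup_measure_inter_nonempty_le (hC : ∀ i, Measurable (C i))
    (hconv : WeakConvTo l (upperFell E) (fun i => (μ i).map (C i)) (μ₀.map C₀))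
    {K : Set E} (hK : IsCompact K) :
    l.limsup (fun i => μ i {ω | ((C i ω : Set E) ∩ K).Nonempty}) ≤
      μ₀ {ω | ((C₀ ω : Set E) ∩ K).Nonempty} :=
  calc l.limsup (fun i => μ i (C i ⁻¹' hitting K))
      ≤ l.limsup (fun i => (μ i).map (C i) (hitting K)) :=
        limsup_le_limsup (.of_forall fun i => Measure.le_map_apply (hC i).aemeasurable _)
    _ ≤ μ₀.map C₀ (hitting K) := hconv _ (isClosed_hitting_upperFell hK)
    _ ≤ μ₀ (C₀ ⁻¹' hitting K) :=
        Measure.map_apply_le_of_measurableSet _ (measurableSet_hitting_borelFell hK)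

theorem limsup_measure_mem_le_capacity [T2Space E] [MeasurableSpace E] [BorelSpace E]
    [∀ i, IsProbabilityMeasure (μ i)] (hC : ∀ i, Measurable (C i))
    (hconv : WeakConvTo l (upperFell E) (fun i => (μ i).map (C i)) (μ₀.map C₀))
    {ξ : ∀ i, Ω i → E} (hξ : ∀ i, Measurable (ξ i))
    (hmem : l.limsup (fun i => μ i {ω | ξ i ω ∉ (C i ω : Set E)}) = 0)
    (htight : ∀ ε : ℝ≥0∞, 0 < ε → ∃ K : Set E, IsCompact K ∧
      1 - ε ≤ l.liminf (fun i => μ i {ω | ξ i ω ∈ K}))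
    {F : Set E} (hF : IsClosed F) :
    l.limsup (fun i => μ i {ω | ξ i ω ∈ F}) ≤ μ₀ {ω | ((C₀ ω : Set E) ∩ F).Nonempty} := by
  refine ENNReal.le_of_forall_pos_le_add fun ε hε _ => ?_
  obtain ⟨K, hK, hKmass⟩ := htight ε (by exact_mod_cast hε)
  have hescape : l.limsup (fun i => μ i {ω | ξ i ω ∉ K}) ≤ ε :=
    limsup_measure_compl_le_of_le_liminf (fun i => hξ i hK.isClosed.measurableSet) hKmass
  calc l.limsup (fun i => μ i {ω | ξ i ω ∈ F})
      ≤ l.limsup ((fun i => μ i {ω | ((C i ω : Set E) ∩ (F ∩ K)).Nonempty}) +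
          ((fun i => μ i {ω | ξ i ω ∉ (C i ω : Set E)}) + fun i => μ i {ω | ξ i ω ∉ K})) :=
        limsup_le_limsup (.of_forall fun i =>
          measure_mem_le_measure_inter_nonempty_add (μ i) (ξ i) (fun ω => C i ω) F K)
    _ ≤ μ₀ {ω | ((C₀ ω : Set E) ∩ (F ∩ K)).Nonempty} + (0 + ε) := by
        grw [ENNReal.limsup_add_le', ENNReal.limsup_add_le', hmem, hescape,
          limsup_measure_inter_nonempty_le hC hconv (hK.inter_left hF)]
    _ ≤ μ₀ {ω | ((C₀ ω : Set E) ∩ F).Nonempty} + ε := by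
        rw [zero_add]
        gcongr
        exact inter_subset_left

end RandomClosedSets

theorem stmt_9_general {E : Type*} [TopologicalSpace E]
    [T2Space E] [MeasurableSpace E] [BorelSpace E]
    {ι : Type*} (l : Filter ι)
    (Ω : ι → Type*) (mΩ : ∀ i, MeasurableSpace (Ω i))
    (μ : ∀ i, @Measure (Ω i) (mΩ i)) (hμ : ∀ i, IsProbabilityMeasure (μ i))
    {Ω₀ : Type*} (mΩ₀ : MeasurableSpace Ω₀) (μ₀ : @Measure Ω₀ mΩ₀)
    (C : ∀ i, Ω i → Closeds E) (C₀ : Ω₀ → Closeds E)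
    (hC : ∀ i, @Measurable _ _ (mΩ i) (borelFell E) (C i))
    (ξ : ∀ i, Ω i → E) (hξ : ∀ i, @Measurable _ _ (mΩ i) _ (ξ i))
    (hconv : WeakConvTo l (upperFell E)
      (fun i => @Measure.map _ _ (mΩ i) (borelFell E) (C i) (μ i))
      (@Measure.map _ _ mΩ₀ (borelFell E) C₀ μ₀))
    (hmem : l.limsup (fun i => μ i {ω | ξ i ω ∉ (C i ω : Set E)}) = 0)
    (htight : ∀ ε : ℝ≥0∞, 0 < ε → ∃ K : Set E, IsCompact K ∧
      1 - ε ≤ l.liminf (fun i => μ i {ω | ξ i ω ∈ K})) :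
    (∀ F : Set E, IsClosed F →
      l.limsup (fun i => μ i {ω | ξ i ω ∈ F}) ≤
        μ₀ {ω | ((C₀ ω : Set E) ∩ F).Nonempty}) ∧
    (∀ ξ₀ : Ω₀ → E, @Measurable _ _ mΩ₀ _ ξ₀ →
      (∀ᵐ ω ∂μ₀, (C₀ ω : Set E) ⊆ {ξ₀ ω}) →
      ∀ F : Set E, IsClosed F →
        l.limsup (fun i => μ i {ω | ξ i ω ∈ F}) ≤ μ₀ {ω | ξ₀ ω ∈ F}) := by
  let := mΩ
  let := mΩ₀
  have hcapacity : ∀ F : Set E, IsClosed F →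
      l.limsup (fun i => μ i {ω | ξ i ω ∈ F}) ≤ μ₀ {ω | ((C₀ ω : Set E) ∩ F).Nonempty} :=
    fun _ hF => limsup_measure_mem_le_capacity hC hconv hξ hmem htight hF
  refine ⟨hcapacity, fun ξ₀ _ hsingleton F hF => (hcapacity F hF).trans (measure_mono_ae ?_)⟩
  filter_upwards [hsingleton] with ω hω ⟨x, hxC, hxF⟩
  obtain rfl : x = ξ₀ ω := hω hxC
  exact hxF

/-- if `C_α →_D C` in `(F, τ_uF)`, `limsup_α P_α(ξ_α ∉ C_α) = 0`
and `(ξ_α)` is asymptotically tight, then `limsup_α P_α(ξ_α ∈ F) ≤ T_C(F)` for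
all closed `F`; if moreover `C ⊆ {ξ}` a.s. for a random variable `ξ`, then
`ξ_α →_D ξ` in `E`. -/
theorem stmt_9 {E : Type*} [TopologicalSpace E] [LocallyCompactSpace E]
    [SecondCountableTopology E] [T2Space E] [MeasurableSpace E] [BorelSpace E]
    {ι : Type*} (l : Filter ι) [l.NeBot]
    (Ω : ι → Type*) (mΩ : ∀ i, MeasurableSpace (Ω i))
    (μ : ∀ i, @Measure (Ω i) (mΩ i)) (hμ : ∀ i, IsProbabilityMeasure (μ i))
    {Ω₀ : Type*} (mΩ₀ : MeasurableSpace Ω₀) (μ₀ : @Measure Ω₀ mΩ₀)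
    (hμ₀ : IsProbabilityMeasure μ₀)
    (C : ∀ i, Ω i → Closeds E) (C₀ : Ω₀ → Closeds E)
    (hC : ∀ i, @Measurable _ _ (mΩ i) (borelFell E) (C i))
    (hC₀ : @Measurable _ _ mΩ₀ (borelFell E) C₀)
    (ξ : ∀ i, Ω i → E) (hξ : ∀ i, @Measurable _ _ (mΩ i) _ (ξ i))
    (hconv : WeakConvTo l (upperFell E)
      (fun i => @Measure.map _ _ (mΩ i) (borelFell E) (C i) (μ i))
      (@Measure.map _ _ mΩ₀ (borelFell E) C₀ μ₀))
    (hmem : l.limsup (fun i => μ i {ω | ξ i ω ∉ (C i ω : Set E)}) = 0)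
    (htight : ∀ ε : ℝ≥0∞, 0 < ε → ∃ K : Set E, IsCompact K ∧
      1 - ε ≤ l.liminf (fun i => μ i {ω | ξ i ω ∈ K})) :
    (∀ F : Set E, IsClosed F →
      l.limsup (fun i => μ i {ω | ξ i ω ∈ F}) ≤
        μ₀ {ω | ((C₀ ω : Set E) ∩ F).Nonempty}) ∧
    (∀ ξ₀ : Ω₀ → E, @Measurable _ _ mΩ₀ _ ξ₀ →
      (∀ᵐ ω ∂μ₀, (C₀ ω : Set E) ⊆ {ξ₀ ω}) →
      ∀ F : Set E, IsClosed F →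
        l.limsup (fun i => μ i {ω | ξ i ω ∈ F}) ≤ μ₀ {ω | ξ₀ ω ∈ F}) :=
  stmt_9_general l Ω mΩ μ hμ mΩ₀ μ₀ C C₀ hC ξ hξ hconv hmem htight
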